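/- Let a ∈ (0,3/10]. Then: (i) for every p ∈ (0, a⁻¹), the function y ↦ [ g_a(2ap/y − a) − g_a((2−2ap)/y + a) ]·y⁻³ is integrable on (p,∞) and ∫_p^∞ [ g_a(2ap/y − a) − g_a((2−2ap)/y + a) ]·y⁻³ dy < 0; (ii) the function y ↦ [ g_a(2/y − a) − g_a(a) ]·y⁻³ is integrable on (a⁻¹, ∞) and ∫_{a⁻¹}^∞ [ g_a(2/y − a) − g_a(a) ]·y⁻³ dy = 0. -/

import Mathlib

/-!
Substituting `s = c / y + b` turns `g_a(s) y⁻³ dy` into `-(s - b) g_a(s) ds / c²`, so each tail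
integral `∫_p^∞ g_a(c / y + b) y⁻³ dy` is a difference of values of the rational primitive
`Φ_{-b} = gfunPrimitive a (-b)` of `u ↦ g_a(u) (u - b)`. For the reflected term (`c = 2ap`,
`b = -a`) this gives `g_a(a) / (2p²) = ∫_p^∞ g_a(a) y⁻³ dy`, which is (ii) at `p = a⁻¹`. For (i)
the other term is larger, since `2 (Φ_{-a}(a + s) - Φ_{-a}(a)) - s² g_a(a)` is `s³` times a
rational function of `a, s` that is positive for `a, s > 0`.
-/

open MeasureTheory Set

/-- `g_a(s) := (2s³ + 3A·s² − 6s − A)/(1 + s²)³` with `A := a⁻¹ − a`. -/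
noncomputable def gfun (a s : ℝ) : ℝ :=
  (2 * s ^ 3 + 3 * (a⁻¹ - a) * s ^ 2 - 6 * s - (a⁻¹ - a)) / (1 + s ^ 2) ^ 3

open Filter Topology

noncomputable def gfunPrimitive (a b u : ℝ) : ℝ :=
  (-2 * u ^ 3 + (-b - 3 / 2 * (a⁻¹ - a)) * u ^ 2 - (a⁻¹ - a) * b * u + (b - (a⁻¹ - a) / 2)) /
    (1 + u ^ 2) ^ 2

theorem hasDerivAt_gfunPrimitive (a b u : ℝ) :
    HasDerivAt (gfunPrimitive a b) (gfun a u * (u + b)) u := by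
  have hnum := ((((hasDerivAt_pow 3 u).const_mul (-2)).fun_add
    ((hasDerivAt_pow 2 u).const_mul (-b - 3 / 2 * (a⁻¹ - a)))).fun_sub
    ((hasDerivAt_id' u).const_mul ((a⁻¹ - a) * b))).add_const (b - (a⁻¹ - a) / 2)
  have hden := ((hasDerivAt_pow 2 u).const_add 1).fun_pow 2
  refine (hnum.fun_div hden (by positivity)).congr_deriv ?_
  simp only [gfun]
  field_simp
  ring

theorem abs_gfun_le (a s : ℝ) : |gfun a s| ≤ 8 + 4 * |a⁻¹ - a| := by
  have hq : 0 < 1 + s ^ 2 := by positivity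
  have hs : |s| ≤ 1 + s ^ 2 := by nlinarith [sq_abs s, abs_nonneg s]
  have hq3 : 1 + s ^ 2 ≤ (1 + s ^ 2) ^ 3 := le_self_pow₀ (by linarith [sq_nonneg s]) (by norm_num)
  have hs3 : |s| ^ 3 ≤ (1 + s ^ 2) ^ 3 := pow_le_pow_left₀ (abs_nonneg s) hs 3
  rw [gfun, abs_div, abs_of_pos (pow_pos hq 3), div_le_iff₀ (pow_pos hq 3)]
  set A := a⁻¹ - a
  calc |2 * s ^ 3 + 3 * A * s ^ 2 - 6 * s - A|
      ≤ 2 * |s| ^ 3 + 3 * |A| * s ^ 2 + 6 * |s| + |A| := by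
        have h1 := abs_sub (2 * s ^ 3 + 3 * A * s ^ 2 - 6 * s) A
        have h2 := abs_sub (2 * s ^ 3 + 3 * A * s ^ 2) (6 * s)
        have h3 := abs_add_le (2 * s ^ 3) (3 * A * s ^ 2)
        simp only [abs_mul, abs_pow, abs_two, abs_of_pos (show (0:ℝ) < 3 by norm_num),
          abs_of_pos (show (0:ℝ) < 6 by norm_num), sq_abs] at h1 h2 h3
        linarith
    _ ≤ (8 + 4 * |A|) * (1 + s ^ 2) ^ 3 := by
        nlinarith [abs_nonneg A, mul_le_mul_of_nonneg_left hq3 (abs_nonneg A)]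

theorem continuous_gfun (a : ℝ) : Continuous (gfun a) :=
  Continuous.div (by fun_prop) (by fun_prop) fun s => by positivity

theorem rpow_neg_three_eqOn : EqOn (fun y : ℝ => y ^ (-3 : ℝ)) (fun y => (y ^ 3)⁻¹) (Ioi 0) :=
  fun y hy => by
    dsimp only
    rw [Real.rpow_neg (le_of_lt hy)]
    norm_cast

theorem integrableOn_Ioi_div_pow_three {f : ℝ → ℝ} {C p : ℝ} (hp : 0 < p) (hf : Measurable f)
    (hC : ∀ y, |f y| ≤ C) : IntegrableOn (fun y => f y / y ^ 3) (Ioi p) := by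
  have hinv : IntegrableOn (fun y : ℝ => (y ^ 3)⁻¹) (Ioi p) :=
    (integrableOn_Ioi_rpow_of_lt (by norm_num) hp).congr_fun
      (rpow_neg_three_eqOn.mono (Ioi_subset_Ioi hp.le)) measurableSet_Ioi
  simp_rw [div_eq_mul_inv]
  exact hinv.bdd_mul hf.aestronglyMeasurable (ae_of_all _ hC)

theorem integral_Ioi_div_pow_three (C : ℝ) {p : ℝ} (hp : 0 < p) :
    ∫ y in Ioi p, C / y ^ 3 = C / (2 * p ^ 2) := by
  have h := integral_Ioi_rpow_of_lt (by norm_num : (-3 : ℝ) < -1) hp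
  rw [setIntegral_congr_fun measurableSet_Ioi
    (rpow_neg_three_eqOn.mono (Ioi_subset_Ioi hp.le))] at h
  simp_rw [div_eq_mul_inv C]
  rw [integral_const_mul, h, show (-3 : ℝ) + 1 = -(2 : ℕ) by norm_num, Real.rpow_neg hp.le,
    Real.rpow_natCast]
  ring

theorem integrableOn_Ioi_gfun_comp_div_pow_three (a : ℝ) {s : ℝ → ℝ} {p : ℝ} (hp : 0 < p)
    (hs : Measurable s) : IntegrableOn (fun y => gfun a (s y) / y ^ 3) (Ioi p) :=
  integrableOn_Ioi_div_pow_three hp ((continuous_gfun a).measurable.comp hs)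
    fun y => abs_gfun_le a (s y)

theorem hasDerivAt_gfunPrimitive_div (a b : ℝ) {c y : ℝ} (hc : c ≠ 0) (hy : y ≠ 0) :
    HasDerivAt (fun y => -gfunPrimitive a (-b) (c / y + b) / c ^ 2)
      (gfun a (c / y + b) / y ^ 3) y := by
  have hin := ((hasDerivAt_inv hy).const_mul c).add_const b
  refine (((hasDerivAt_gfunPrimitive a (-b) _).comp y hin).neg.div_const (c ^ 2)).congr_deriv ?_
  field_simp
  ring

theorem integral_Ioi_gfun_div_pow_three (a b : ℝ) {c p : ℝ} (hc : c ≠ 0) (hp : 0 < p) :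
    ∫ y in Ioi p, gfun a (c / y + b) / y ^ 3 =
      (gfunPrimitive a (-b) (c / p + b) - gfunPrimitive a (-b) b) / c ^ 2 := by
  have hlim : Tendsto (fun y => -gfunPrimitive a (-b) (c / y + b) / c ^ 2) atTop
      (𝓝 (-gfunPrimitive a (-b) b / c ^ 2)) := by
    have hin : Tendsto (fun y => c / y + b) atTop (𝓝 b) := by
      simpa using (tendsto_const_nhds.div_atTop tendsto_id).add_const b
    exact ((hasDerivAt_gfunPrimitive a (-b) b).continuousAt.tendsto.comp hin).neg.div_const _
  rw [integral_Ioi_of_hasDerivAt_of_tendsto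
    (hasDerivAt_gfunPrimitive_div a b hc hp.ne').continuousAt.continuousWithinAt
    (fun y hy => hasDerivAt_gfunPrimitive_div a b hc (hp.trans hy).ne')
    (integrableOn_Ioi_gfun_comp_div_pow_three a hp (by fun_prop)) hlim]
  ring

theorem gfunPrimitive_self_sub_neg {a : ℝ} (ha : a ≠ 0) :
    gfunPrimitive a a a - gfunPrimitive a a (-a) = 2 * a ^ 2 * gfun a a := by
  simp only [gfunPrimitive, gfun]
  field_simp
  ring

theorem integral_Ioi_gfun_reflect {a p : ℝ} (ha : 0 < a) (hp : 0 < p) :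
    ∫ y in Ioi p, gfun a (2 * a * p / y - a) / y ^ 3 = gfun a a / (2 * p ^ 2) := by
  have hc : 2 * a * p / p + -a = a := by field_simp; ring
  simp_rw [sub_eq_add_neg _ a]
  rw [integral_Ioi_gfun_div_pow_three a (-a) (by positivity) hp, hc, neg_neg,
    gfunPrimitive_self_sub_neg ha.ne']
  field_simp

theorem gfun_mul_sq_lt_two_mul_gfunPrimitive_sub {a s : ℝ} (ha : 0 < a) (hs : 0 < s) :
    gfun a a * s ^ 2 < 2 * (gfunPrimitive a (-a) (a + s) - gfunPrimitive a (-a) a) := by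
  have key : 2 * (gfunPrimitive a (-a) (a + s) - gfunPrimitive a (-a) a) - gfun a a * s ^ 2 =
      s ^ 3 * ((a + s) ^ 3 + a * (a + s) ^ 2 + (2 * a ^ 2 + 3) * (a + s) + a) /
        (a * (1 + a ^ 2) * (1 + (a + s) ^ 2) ^ 2) := by
    simp only [gfunPrimitive, gfun]
    field_simp
    ring
  have : 0 < 2 * (gfunPrimitive a (-a) (a + s) - gfunPrimitive a (-a) a) - gfun a a * s ^ 2 := by
    rw [key]; positivity
  linarith

theorem gfun_div_lt_integral_Ioi {a p : ℝ} (ha : 0 < a) (hp : 0 < p) (hpa : p < a⁻¹) :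
    gfun a a / (2 * p ^ 2) < ∫ y in Ioi p, gfun a ((2 - 2 * a * p) / y + a) / y ^ 3 := by
  have hap : a * p < 1 := by rw [← lt_inv_mul_iff₀ ha, mul_one]; exact hpa
  set s := 2 / p - 2 * a with hs_def
  have hs : 0 < s := by
    rw [hs_def, sub_pos, lt_div_iff₀ hp]; linarith
  have hd : 2 - 2 * a * p = p * s := by rw [hs_def]; field_simp
  have hsub : (2 - 2 * a * p) / p + a = a + s := by rw [hd]; field_simp; ring
  rw [integral_Ioi_gfun_div_pow_three a a (by rw [hd]; positivity) hp, hsub, hd,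
    div_lt_div_iff₀ (by positivity) (by positivity)]
  have key := gfun_mul_sq_lt_two_mul_gfunPrimitive_sub ha hs
  nlinarith [mul_lt_mul_of_pos_left key (pow_pos hp 2)]

theorem gfun_tail_integrals_general (a : ℝ) (ha : 0 < a) :
    (∀ p : ℝ, 0 < p → p < a⁻¹ →
      IntegrableOn
        (fun y : ℝ => (gfun a (2 * a * p / y - a) - gfun a ((2 - 2 * a * p) / y + a)) / y ^ 3)
        (Ioi p) ∧
      (∫ y in Ioi p,
        (gfun a (2 * a * p / y - a) - gfun a ((2 - 2 * a * p) / y + a)) / y ^ 3) < 0) ∧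
    (IntegrableOn (fun y : ℝ => (gfun a (2 / y - a) - gfun a a) / y ^ 3) (Ioi a⁻¹) ∧
      (∫ y in Ioi a⁻¹, (gfun a (2 / y - a) - gfun a a) / y ^ 3) = 0) := by
  simp_rw [sub_div (gfun a _)]
  refine ⟨fun p hp hpa => ?_, ?_⟩
  · have h₁ := integrableOn_Ioi_gfun_comp_div_pow_three a hp
      (by fun_prop : Measurable fun y => 2 * a * p / y - a)
    have h₂ := integrableOn_Ioi_gfun_comp_div_pow_three a hp
      (by fun_prop : Measurable fun y => (2 - 2 * a * p) / y + a)
    refine ⟨h₁.sub h₂, ?_⟩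
    rw [integral_sub h₁ h₂, integral_Ioi_gfun_reflect ha hp, sub_neg]
    exact gfun_div_lt_integral_Ioi ha hp hpa
  · have hp : 0 < a⁻¹ := inv_pos.2 ha
    have h₁ := integrableOn_Ioi_gfun_comp_div_pow_three a hp
      (by fun_prop : Measurable fun y => 2 / y - a)
    have h₂ := integrableOn_Ioi_div_pow_three hp measurable_const fun _ => abs_gfun_le a a
    refine ⟨h₁.sub h₂, ?_⟩
    have hreflect := integral_Ioi_gfun_reflect ha hp
    rw [mul_assoc, mul_inv_cancel₀ ha.ne', mul_one] at hreflect
    rw [integral_sub h₁ h₂, hreflect, integral_Ioi_div_pow_three _ hp, sub_self]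

/-- For `a ∈ (0, 3/10]`:
(i) for every `p ∈ (0, a⁻¹)`, `y ↦ [g_a(2ap/y − a) − g_a((2−2ap)/y + a)]/y³` is integrable on
`(p,∞)` with negative integral; (ii) `y ↦ [g_a(2/y − a) − g_a(a)]/y³` is integrable on
`(a⁻¹,∞)` with integral `0`. -/
theorem gfun_tail_integrals (a : ℝ) (ha : 0 < a) (ha' : a ≤ 3 / 10) :
    (∀ p : ℝ, 0 < p → p < a⁻¹ →
      IntegrableOn
        (fun y : ℝ => (gfun a (2 * a * p / y - a) - gfun a ((2 - 2 * a * p) / y + a)) / y ^ 3)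
        (Ioi p) ∧
      (∫ y in Ioi p,
        (gfun a (2 * a * p / y - a) - gfun a ((2 - 2 * a * p) / y + a)) / y ^ 3) < 0) ∧
    (IntegrableOn (fun y : ℝ => (gfun a (2 / y - a) - gfun a a) / y ^ 3) (Ioi a⁻¹) ∧
      (∫ y in Ioi a⁻¹, (gfun a (2 / y - a) - gfun a a) / y ^ 3) = 0) :=
  gfun_tail_integrals_general a ha
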